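/- Let H be a connected graph on n nodes with maximum degree Δ satisfying 2 ≤ Δ. Then MS(H, K_n) ≥ n(n − Δ − 1)/(4Δ − 4) and MT(H, K_n) ≥ (n − Δ − 1)/(2Δ − 2), where K_n is the complete graph on n nodes. -/

import Mathlib

/-- A permutation of the nodes is a *swap layer* of `H` if it is an involution that moves
each node only to an adjacent node; such permutations are exactly the products of the
transpositions swapping the two endpoints of each edge of a matching of `H`. -/
def IsSwapLayer {V : Type*} (H : SimpleGraph V) (π : Equiv.Perm V) : Prop :=
  π * π = 1 ∧ ∀ v, π v = v ∨ H.Adj v (π v)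

/-- A solution to the Token Meeting Problem instance `(H, A)`: an initial bijection
from tokens to nodes together with a sequence of swap layers (matchings encoded as
involutive permutations), such that every connection of `A` is placed on an edge of `H`
at some intermediate time. The bijection after `t` layers is the composition of the
first `t` layer permutations (in order) with the initial bijection. -/
structure TMPSolution {V Q : Type*} (H : SimpleGraph V) (A : SimpleGraph Q) where
  init : Q ≃ V
  layers : List (Equiv.Perm V)
  isSwapLayer : ∀ π ∈ layers, IsSwapLayer H π
  meets : ∀ p q : Q, A.Adj p q → ∃ t ≤ layers.length,
    H.Adj (((layers.take t).reverse.prod) (init p)) (((layers.take t).reverse.prod) (init q))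

namespace TMPSolution

variable {V Q : Type*} {H : SimpleGraph V} {A : SimpleGraph Q}

/-- The bijection from tokens to nodes after the first `t` swap layers, i.e. `f_{t+1}`. -/
def bijAt (s : TMPSolution H A) (t : ℕ) : Q ≃ V :=
  s.init.trans ((s.layers.take t).reverse.prod : Equiv.Perm V)

/-- The number of steps of a solution. -/
def steps (s : TMPSolution H A) : ℕ := s.layers.length

/-- The number of swaps of a solution: each swap layer contributes the number of
transpositions it is composed of, i.e. half the size of its support. -/
noncomputable def swaps [Fintype V] [DecidableEq V] (s : TMPSolution H A) : ℕ :=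
  (s.layers.map fun π => π.support.card / 2).sum

end TMPSolution

/-- `MS H A`: the minimum number of swaps of any solution (`⊤` if none exists). -/
noncomputable def MS {V Q : Type*} [Fintype V] [DecidableEq V] (H : SimpleGraph V)
    (A : SimpleGraph Q) : ℕ∞ :=
  sInf {n : ℕ∞ | ∃ s : TMPSolution H A, n = (s.swaps : ℕ∞)}

/-- `MT H A`: the minimum number of steps of any solution (`⊤` if none exists). -/
noncomputable def MT {V Q : Type*} (H : SimpleGraph V) (A : SimpleGraph Q) : ℕ∞ :=
  sInf {n : ℕ∞ | ∃ s : TMPSolution H A, n = (s.steps : ℕ∞)}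

/-- `MSt H A t`: the minimum number of swaps of any solution with exactly `t` steps
(`⊤` if none exists). -/
noncomputable def MSt {V Q : Type*} [Fintype V] [DecidableEq V] (H : SimpleGraph V)
    (A : SimpleGraph Q) (t : ℕ) : ℕ∞ :=
  sInf {n : ℕ∞ | ∃ s : TMPSolution H A, s.steps = t ∧ n = (s.swaps : ℕ∞)}


section Aux

open Finset

private lemma list_sum_getD (l : List ℕ) :
    l.sum = ∑ i ∈ Finset.range l.length, l.getD i 0 := by
  induction l with
  | nil => simp
  | cons a tl ih =>
    rw [List.sum_cons, List.length_cons, Finset.sum_range_succ']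
    simp [ih]
    omega

namespace TMPSolution

variable {V Q : Type*} {H : SimpleGraph V} {A : SimpleGraph Q}

lemma bijAt_succ (s : TMPSolution H A) (t : ℕ) (ht : t < s.layers.length) (q : Q) :
    s.bijAt (t + 1) q = (s.layers.get ⟨t, ht⟩) (s.bijAt t q) := by
  simp only [TMPSolution.bijAt, Equiv.trans_apply]
  rw [← List.take_concat_get' s.layers t ht, List.reverse_append]
  simp [Equiv.Perm.mul_apply]

lemma meets' (s : TMPSolution H A) (p q : Q) (h : A.Adj p q) :
    ∃ t, t ≤ s.layers.length ∧ H.Adj (s.bijAt t p) (s.bijAt t q) := by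
  obtain ⟨t, h1, h2⟩ := s.meets p q h
  exact ⟨t, h1, h2⟩

end TMPSolution

private lemma tmp_steps_bound {V Q : Type*} [Fintype V] [DecidableEq V] [Fintype Q]
    {H : SimpleGraph V} [DecidableRel H.Adj] {n Δ : ℕ}
    (hQ : Fintype.card Q = n) (hmax : H.maxDegree = Δ)
    (s : TMPSolution H (⊤ : SimpleGraph Q)) :
    n - 1 ≤ (s.steps + 1) * Δ := by
  classical
  rcases Nat.eq_zero_or_pos n with rfl | hn
  · simp
  have hne : Nonempty Q := by rw [← Fintype.card_pos_iff, hQ]; exact hn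
  obtain ⟨p₀⟩ := hne
  have hmeet : ∀ q : Q, q ≠ p₀ → ∃ t, t ≤ s.layers.length ∧
      H.Adj (s.bijAt t p₀) (s.bijAt t q) := by
    intro q hq
    exact s.meets' p₀ q (by simp [Ne.symm hq])
  choose! t ht hadj using hmeet
  have hcard := Finset.card_le_card_of_injOn
    (fun q => (⟨t q, s.bijAt (t q) q⟩ : (_ : ℕ) × V))
    (s := Finset.univ.erase p₀)
    (t := (Finset.range (s.steps + 1)).sigma fun i => H.neighborFinset (s.bijAt i p₀))
    (fun q hq => by
      have hq' : q ≠ p₀ := (Finset.mem_erase.mp hq).1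
      refine Finset.mem_sigma.mpr ⟨Finset.mem_range.mpr ?_, ?_⟩
      · have := ht q hq'; simp only [TMPSolution.steps]; omega
      · exact (SimpleGraph.mem_neighborFinset H _ _).mpr (hadj q hq'))
    (by
      intro a ha b hb hab
      simp only [Sigma.mk.inj_iff] at hab
      obtain ⟨h1, h2⟩ := hab
      rw [h1] at h2
      exact (s.bijAt (t b)).injective (eq_of_heq h2))
  have h1 : (Finset.univ.erase p₀).card = n - 1 := by
    rw [Finset.card_erase_of_mem (Finset.mem_univ _), Finset.card_univ, hQ]
  have h2 : ((Finset.range (s.steps + 1)).sigma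
      fun i => H.neighborFinset (s.bijAt i p₀)).card ≤ (s.steps + 1) * Δ := by
    rw [Finset.card_sigma]
    calc ∑ i ∈ Finset.range (s.steps + 1), (H.neighborFinset (s.bijAt i p₀)).card
        ≤ ∑ _i ∈ Finset.range (s.steps + 1), Δ := by
          refine Finset.sum_le_sum fun i _ => ?_
          rw [H.card_neighborFinset_eq_degree]
          exact hmax ▸ H.degree_le_maxDegree _
      _ = (s.steps + 1) * Δ := by rw [Finset.sum_const, Finset.card_range, smul_eq_mul]
  omega

end Aux

private lemma tmp_swaps_bound {V Q : Type*} [Fintype V] [DecidableEq V] [Fintype Q]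
    {H : SimpleGraph V} [DecidableRel H.Adj] {n Δ : ℕ}
    (hV : Fintype.card V = n) (hQ : Fintype.card Q = n) (hmax : H.maxDegree = Δ)
    (hΔ : 1 ≤ Δ) (s : TMPSolution H (⊤ : SimpleGraph Q)) :
    n * n - n ≤ n * Δ + (4 * Δ - 4) * s.swaps := by
  classical
  set k := s.layers.length with hk
  have hex : ∀ pq : Q × Q, pq.1 ≠ pq.2 →
      ∃ u, H.Adj (s.bijAt u pq.1) (s.bijAt u pq.2) := by
    intro pq hne
    obtain ⟨u, -, hu⟩ := s.meets' pq.1 pq.2 (by simp [hne])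
    exact ⟨u, hu⟩
  set T : Q × Q → ℕ := fun pq =>
    if h : ∃ u, H.Adj (s.bijAt u pq.1) (s.bijAt u pq.2) then Nat.find h else 0 with hT
  have hTle : ∀ pq : Q × Q, pq.1 ≠ pq.2 → T pq ≤ k := by
    intro pq hne
    obtain ⟨u, hu, hadj⟩ := s.meets' pq.1 pq.2 (by simp [hne])
    have hfind : T pq = Nat.find (hex pq hne) := dif_pos (hex pq hne)
    rw [hfind]
    exact le_trans (Nat.find_min' _ hadj) hu
  have hfib := Finset.card_eq_sum_card_fiberwise (f := T)
    (s := (Finset.univ : Finset Q).offDiag) (t := Finset.range (k + 1))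
    (fun pq hpq => Finset.mem_range.mpr
      (by have := hTle pq (Finset.mem_offDiag.mp hpq).2.2; omega))
  have hoff : ((Finset.univ : Finset Q).offDiag).card = n * n - n := by
    rw [Finset.offDiag_card, Finset.card_univ, hQ]
  -- fiber at time 0
  have h0 : ((Finset.univ : Finset Q).offDiag.filter fun pq => T pq = 0).card
      ≤ n * Δ := by
    have hinj := Finset.card_le_card_of_injOn
      (fun pq : Q × Q => (⟨s.bijAt 0 pq.1, s.bijAt 0 pq.2⟩ : (_ : V) × V))
      (s := (Finset.univ : Finset Q).offDiag.filter fun pq => T pq = 0)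
      (t := Finset.univ.sigma fun v => H.neighborFinset v)
      (fun pq hpq => by
        rw [Finset.mem_coe, Finset.mem_filter, Finset.mem_offDiag] at hpq
        obtain ⟨⟨-, -, hne⟩, hT0⟩ := hpq
        have hfind : T pq = Nat.find (hex pq hne) := dif_pos (hex pq hne)
        have hadj0 : H.Adj (s.bijAt 0 pq.1) (s.bijAt 0 pq.2) := by
          have := Nat.find_spec (hex pq hne)
          rwa [← hfind, hT0] at this
        exact Finset.mem_sigma.mpr ⟨Finset.mem_univ _,
          (SimpleGraph.mem_neighborFinset H _ _).mpr hadj0⟩)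
      (by
        intro a ha b hb hab
        simp only [Sigma.mk.inj_iff] at hab
        obtain ⟨h1, h2⟩ := hab
        exact Prod.ext ((s.bijAt 0).injective h1)
          ((s.bijAt 0).injective (eq_of_heq h2)))
    refine hinj.trans ?_
    rw [Finset.card_sigma]
    calc ∑ v : V, (H.neighborFinset v).card ≤ ∑ _v : V, Δ := by
          refine Finset.sum_le_sum fun v _ => ?_
          rw [H.card_neighborFinset_eq_degree]
          exact hmax ▸ H.degree_le_maxDegree _
      _ = n * Δ := by rw [Finset.sum_const, Finset.card_univ, hV, smul_eq_mul]
  -- fibers at successor times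
  have hsucc : ∀ u ∈ Finset.range k,
      ((Finset.univ : Finset Q).offDiag.filter fun pq => T pq = u + 1).card
      ≤ (4 * Δ - 4) * ((s.layers.map fun π => π.support.card / 2).getD u 0) := by
    intro u humem
    have hu : u < k := Finset.mem_range.mp humem
    set π := s.layers.get ⟨u, hu⟩ with hπ
    have hlayer : IsSwapLayer H π := s.isSwapLayer _ (List.get_mem s.layers ⟨u, hu⟩)
    have hinv : ∀ v, π (π v) = v := by
      intro v
      have := congrArg (fun ρ : Equiv.Perm V => ρ v) hlayer.1
      simpa [Equiv.Perm.mul_apply] using this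
    have hstep : ∀ q, s.bijAt (u + 1) q = π (s.bijAt u q) := fun q => s.bijAt_succ u hu q
    set F := (Finset.univ : Finset Q).offDiag.filter (fun pq => T pq = u + 1) with hF
    have hfacts : ∀ pq ∈ F, pq.1 ≠ pq.2 ∧
        H.Adj (s.bijAt (u + 1) pq.1) (s.bijAt (u + 1) pq.2) ∧
        ¬ H.Adj (s.bijAt u pq.1) (s.bijAt u pq.2) := by
      intro pq hpq
      rw [hF, Finset.mem_filter, Finset.mem_offDiag] at hpq
      obtain ⟨⟨-, -, hne⟩, hTpq⟩ := hpq
      have hfind : T pq = Nat.find (hex pq hne) := dif_pos (hex pq hne)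
      refine ⟨hne, ?_, ?_⟩
      · have := Nat.find_spec (hex pq hne)
        rwa [← hfind, hTpq] at this
      · exact Nat.find_min (hex pq hne) (by rw [← hfind, hTpq]; omega)
    set Tgt := π.support.sigma (fun v => (H.neighborFinset v).erase (π v)) with hTgt
    have hTgtcard : Tgt.card ≤ π.support.card * (Δ - 1) := by
      rw [hTgt, Finset.card_sigma]
      calc ∑ v ∈ π.support, ((H.neighborFinset v).erase (π v)).card
          ≤ ∑ _v ∈ π.support, (Δ - 1) := by
            refine Finset.sum_le_sum fun v hv => ?_
            have hmem : π v ∈ H.neighborFinset v := by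
              rw [SimpleGraph.mem_neighborFinset]
              rcases hlayer.2 v with h | h
              · exact absurd h (Equiv.Perm.mem_support.mp hv)
              · exact h
            rw [Finset.card_erase_of_mem hmem, H.card_neighborFinset_eq_degree]
            have := hmax ▸ H.degree_le_maxDegree v
            omega
        _ = π.support.card * (Δ - 1) := by rw [Finset.sum_const, smul_eq_mul]
    have hcard1 : (F.filter fun pq => s.bijAt u pq.1 ∈ π.support).card ≤ Tgt.card := by
      refine Finset.card_le_card_of_injOn
        (fun pq => ⟨s.bijAt (u + 1) pq.1, s.bijAt (u + 1) pq.2⟩) ?_ ?_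
      · intro pq hpq
        rw [Finset.mem_coe, Finset.mem_filter] at hpq
        obtain ⟨hpqF, hmoved⟩ := hpq
        obtain ⟨hne, hadj1, hnadj⟩ := hfacts pq hpqF
        have hmoved' : π (s.bijAt u pq.1) ≠ s.bijAt u pq.1 :=
          Equiv.Perm.mem_support.mp hmoved
        simp only [Finset.mem_coe, hTgt, Finset.mem_sigma, Finset.mem_erase,
          SimpleGraph.mem_neighborFinset, Equiv.Perm.mem_support]
        refine ⟨?_, ?_, ?_⟩
        · rw [hstep, hinv]
          exact fun h => hmoved' h.symm
        · rw [hstep pq.1, hinv, hstep pq.2]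
          intro h
          apply hnadj
          have h2 := congrArg π h
          rw [hinv] at h2
          rw [h2]
          rcases hlayer.2 (s.bijAt u pq.1) with hfix | hadj
          · exact absurd hfix hmoved'
          · exact hadj
        · exact hadj1
      · intro a ha b hb hab
        simp only [Sigma.mk.inj_iff] at hab
        obtain ⟨h1, h2⟩ := hab
        exact Prod.ext ((s.bijAt (u + 1)).injective h1)
          ((s.bijAt (u + 1)).injective (eq_of_heq h2))
    have hcard2 : (F.filter fun pq => ¬ (s.bijAt u pq.1 ∈ π.support)).card
        ≤ Tgt.card := by
      refine Finset.card_le_card_of_injOn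
        (fun pq => ⟨s.bijAt (u + 1) pq.2, s.bijAt (u + 1) pq.1⟩) ?_ ?_
      · intro pq hpq
        rw [Finset.mem_coe, Finset.mem_filter] at hpq
        obtain ⟨hpqF, hfix⟩ := hpq
        obtain ⟨hne, hadj1, hnadj⟩ := hfacts pq hpqF
        have hfix' : π (s.bijAt u pq.1) = s.bijAt u pq.1 := by
          by_contra h
          exact hfix (Equiv.Perm.mem_support.mpr h)
        have hmoved2 : π (s.bijAt u pq.2) ≠ s.bijAt u pq.2 := by
          intro h
          apply hnadj
          have := hadj1
          rwa [hstep, hstep, hfix', h] at this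
        simp only [Finset.mem_coe, hTgt, Finset.mem_sigma, Finset.mem_erase,
          SimpleGraph.mem_neighborFinset, Equiv.Perm.mem_support]
        refine ⟨?_, ?_, ?_⟩
        · rw [hstep, hinv]
          exact fun h => hmoved2 h.symm
        · rw [hstep pq.2, hinv, hstep pq.1, hfix']
          exact fun h => hne ((s.bijAt u).injective h)
        · exact hadj1.symm
      · intro a ha b hb hab
        simp only [Sigma.mk.inj_iff] at hab
        obtain ⟨h1, h2⟩ := hab
        exact Prod.ext ((s.bijAt (u + 1)).injective (eq_of_heq h2))
          ((s.bijAt (u + 1)).injective h1)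
    have hsplit := Finset.card_filter_add_card_filter_not
      (s := F) (p := fun pq => s.bijAt u pq.1 ∈ π.support)
    have hdvd : 2 ∣ π.support.card :=
      Equiv.Perm.two_dvd_card_support (by rw [sq]; exact hlayer.1)
    obtain ⟨m, hm⟩ := hdvd
    have hgetD : (s.layers.map fun ρ => ρ.support.card / 2).getD u 0 = m := by
      rw [List.getD_eq_getElem _ _ (by simpa using hu), List.getElem_map]
      have hπ' : s.layers[u] = π := rfl
      rw [hπ', hm]
      omega
    rw [hgetD]
    calc F.card
        = (F.filter fun pq => s.bijAt u pq.1 ∈ π.support).card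
          + (F.filter fun pq => ¬ (s.bijAt u pq.1 ∈ π.support)).card := hsplit.symm
      _ ≤ Tgt.card + Tgt.card := Nat.add_le_add hcard1 hcard2
      _ ≤ π.support.card * (Δ - 1) + π.support.card * (Δ - 1) :=
          Nat.add_le_add hTgtcard hTgtcard
      _ = (4 * Δ - 4) * m := by
          rw [hm, show 4 * Δ - 4 = 4 * (Δ - 1) from by omega]
          ring
  -- put it together
  rw [hoff, Finset.sum_range_succ'] at hfib

  have hsum2 := Finset.sum_le_sum hsucc
  rw [← Finset.mul_sum] at hsum2
  have hswaps : ∑ u ∈ Finset.range k, (s.layers.map fun π => π.support.card / 2).getD u 0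
      = s.swaps := by
    rw [TMPSolution.swaps, list_sum_getD, List.length_map]
  rw [hswaps] at hsum2
  rw [hfib]
  refine le_trans (Nat.add_le_add hsum2 h0) ?_
  rw [Nat.add_comm]


/-- For a connected graph `H` on `n` nodes with maximum degree `Δ ≥ 2`:
`MS(H, K_n) ≥ n(n - Δ - 1)/(4Δ - 4)` and `MT(H, K_n) ≥ (n - Δ - 1)/(2Δ - 2)`. -/
theorem lower_bounds_by_max_degree {V Q : Type*} [Fintype V] [DecidableEq V] [Fintype Q]
    (H : SimpleGraph V) [DecidableRel H.Adj] (n Δ : ℕ)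
    (hV : Fintype.card V = n) (hQ : Fintype.card Q = n)
    (hconn : H.Connected) (hmax : H.maxDegree = Δ) (hΔ : 2 ≤ Δ) :
    ((n * (n - Δ - 1) : ℕ) : ℕ∞) ≤ ((4 * Δ - 4 : ℕ) : ℕ∞) * MS H (⊤ : SimpleGraph Q) ∧
      ((n - Δ - 1 : ℕ) : ℕ∞) ≤ ((2 * Δ - 2 : ℕ) : ℕ∞) * MT H (⊤ : SimpleGraph Q) := by
  have hΔ4 : (4 * Δ - 4 : ℕ) ≠ 0 := by omega
  have hΔ2 : (2 * Δ - 2 : ℕ) ≠ 0 := by omega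
  constructor
  · unfold MS
    rcases Set.eq_empty_or_nonempty
      {x : ℕ∞ | ∃ s : TMPSolution H (⊤ : SimpleGraph Q), x = (s.swaps : ℕ∞)} with h | h
    · rw [h, sInf_empty, ENat.mul_top (Nat.cast_ne_zero.mpr hΔ4)]
      exact le_top
    · obtain ⟨s, hs⟩ := csInf_mem h
      rw [hs, ← Nat.cast_mul, Nat.cast_le]
      have hb := tmp_swaps_bound hV hQ hmax (by omega) s
      rcases le_or_gt n (Δ + 1) with hsm | hbig
      · rw [show n - Δ - 1 = 0 from by omega, Nat.mul_zero]
        exact Nat.zero_le _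
      · have key : n * (n - Δ - 1) + n * Δ + n = n * n := by
          have h1 : (n - Δ - 1) + Δ + 1 = n := by omega
          calc n * (n - Δ - 1) + n * Δ + n = n * ((n - Δ - 1) + Δ + 1) := by ring
            _ = n * n := by rw [h1]
        generalize hA : n * (n - Δ - 1) = A at key ⊢
        generalize hS : (4 * Δ - 4) * s.swaps = S at hb ⊢
        generalize hB : n * Δ = B at key hb
        generalize hC : n * n = C at key hb
        omega
  · unfold MT
    rcases Set.eq_empty_or_nonempty
      {x : ℕ∞ | ∃ s : TMPSolution H (⊤ : SimpleGraph Q), x = (s.steps : ℕ∞)} with h | h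
    · rw [h, sInf_empty, ENat.mul_top (Nat.cast_ne_zero.mpr hΔ2)]
      exact le_top
    · obtain ⟨s, hs⟩ := csInf_mem h
      rw [hs, ← Nat.cast_mul, Nat.cast_le]
      have hb := tmp_steps_bound hQ hmax s
      have h1 : (s.steps + 1) * Δ = s.steps * Δ + Δ := by ring
      have h2 : s.steps * Δ ≤ s.steps * (2 * Δ - 2) := Nat.mul_le_mul_left _ (by omega)
      have h3 : (2 * Δ - 2) * s.steps = s.steps * (2 * Δ - 2) := Nat.mul_comm _ _
      rw [h3]
      generalize hB : s.steps * (2 * Δ - 2) = B at h2 ⊢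
      generalize hA : s.steps * Δ = A at h1 h2
      generalize hC : (s.steps + 1) * Δ = C at h1 hb
      omega
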